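/- Let d be a fundamental discriminant and let ℓ ≠ 3 be a prime dividing d. Then the elliptic curve E_d over the field ℚ_ℓ of ℓ-adic numbers, defined by the Weierstrass equation y² = x³ − 432d, has no ℚ_ℓ-rational point of order 3; that is, every point P ∈ E_d(ℚ_ℓ) with 3·P = O satisfies P = O. -/

import Mathlib

/-!
A point `P ≠ O` of `y² = x³ + b` with `3P = O` satisfies `2P = -P`, so the tangent slope
`λ = 3x²/2y` satisfies `λ² - 2x = x`; together with the curve equation this gives
`x (x³ + 4b) = 0`, hence `y² = b` or `y² = -3b`. As `b = -432d = 12²·(-3d)` and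
`-3b = 36²·d`, such a point makes `c·d` a square in `ℚ_ℓ` for `c = -3` or `c = 1`.
For odd `ℓ ∣ d` the valuation of `c·d` is `1`. For `ℓ = 2` we have `d = 4m`: if `m ≡ 2 (mod 4)`
the valuation is `3`, and if `m ≡ 3 (mod 4)` then `c·d = 2²·(c·m)` with `c·m ≡ 3 (mod 4)`,
which is not a square modulo `4`.
-/

namespace WeierstrassCurve

abbrev mordell {F : Type*} [Field F] (b : F) : WeierstrassCurve F :=
  { a₁ := 0, a₂ := 0, a₃ := 0, a₄ := 0, a₆ := b }

namespace Affine.Point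

variable {F : Type*} [Field F] [DecidableEq F]

lemma Y_ne_negY_and_addX_eq_of_three_nsmul_eq_zero {W : Affine F} {x y : F}
    {h : W.Nonsingular x y} (hP : 3 • some x y h = 0) :
    y ≠ W.negY x y ∧ W.addX x x (W.slope x x y y) = x := by
  have hdouble : some x y h + some x y h = -some x y h :=
    eq_neg_of_add_eq_zero_left (by rw [← hP, succ_nsmul, two_nsmul])
  by_cases hy : y = W.negY x y
  · rw [add_self_of_Y_eq hy] at hdouble
    exact absurd (neg_eq_zero.mp hdouble.symm) (some_ne_zero h)
  · rw [add_self_of_Y_ne hy, neg_some, some.injEq] at hdouble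
    exact ⟨hy, hdouble.1⟩

lemma isSquare_of_three_nsmul_eq_zero_mordell {b : F} (h3 : (3 : F) ≠ 0)
    {P : (mordell b).toAffine.Point} (hP : 3 • P = 0) (hP0 : P ≠ 0) :
    IsSquare b ∨ IsSquare (-3 * b) := by
  cases P with
  | zero => exact absurd rfl hP0
  | some x y h =>
    obtain ⟨hy, hx⟩ := Y_ne_negY_and_addX_eq_of_three_nsmul_eq_zero hP
    have hcurve : y ^ 2 = x ^ 3 + b := by
      have := (equation_iff x y).mp h.1
      linear_combination this
    have h2y : 2 * y ≠ 0 := by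
      contrapose! hy
      simp only [negY]
      linear_combination hy
    have hslope : (mordell b).toAffine.slope x x y y = 3 * x ^ 2 / (2 * y) := by
      rw [slope_of_Y_ne rfl hy]
      simp only [negY]
      ring
    have htangent : 3 * x * (x ^ 3 + 4 * b) = 0 := by
      rw [hslope] at hx
      simp only [addX, zero_mul, add_zero, sub_zero] at hx
      have hx' : (3 * x ^ 2) ^ 2 = 3 * x * (2 * y) ^ 2 := by
        rw [← div_eq_iff (pow_ne_zero 2 h2y), ← div_pow]
        linear_combination hx
      linear_combination -hx' - 12 * x * hcurve
    rcases mul_eq_zero.mp htangent with hx0 | hx3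
    · left
      refine ⟨y, ?_⟩
      have : x = 0 := (mul_eq_zero.mp hx0).resolve_left h3
      rw [← sq, hcurve, this]
      ring
    · right
      refine ⟨y, ?_⟩
      linear_combination -hcurve - hx3

end Affine.Point

end WeierstrassCurve

namespace Padic

variable {p : ℕ} [Fact p.Prime]

lemma even_valuation_of_isSquare {x : ℚ_[p]} (hx : IsSquare x) : Even x.valuation := by
  obtain ⟨r, rfl⟩ := hx
  rcases eq_or_ne r 0 with rfl | hr
  · simp
  · exact ⟨_, valuation_mul hr hr⟩

lemma not_isSquare_prime_pow_mul {n : ℕ} (hn : Odd n) {k : ℤ} (hk : ¬(p : ℤ) ∣ k) :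
    ¬IsSquare ((p : ℚ_[p]) ^ n * k) := by
  have hp0 : (p : ℚ_[p]) ≠ 0 := by exact_mod_cast (Fact.out : p.Prime).ne_zero
  have hk0 : (k : ℚ_[p]) ≠ 0 := Int.cast_ne_zero.mpr (by rintro rfl; exact hk (dvd_zero _))
  have hval : ((p : ℚ_[p]) ^ n * k).valuation = n := by
    rw [valuation_mul (pow_ne_zero n hp0) hk0, valuation_pow, valuation_p, valuation_intCast,
      padicValInt.eq_zero_of_not_dvd hk]
    ring
  intro hsq
  have := even_valuation_of_isSquare hsq
  rw [hval, Int.even_coe_nat] at this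
  exact Nat.not_even_iff_odd.mpr hn this

lemma not_isSquare_intCast_of_emod_four_eq_three {u : ℤ} (hu : u % 4 = 3) :
    ¬IsSquare (u : ℚ_[2]) := by
  rintro ⟨r, hr⟩
  have hr1 : ‖r‖ ≤ 1 := by
    have : ‖r‖ * ‖r‖ ≤ 1 := by rw [← norm_mul, ← hr]; exact norm_int_le_one u
    nlinarith [norm_nonneg r]
  set r' : ℤ_[2] := ⟨r, hr1⟩
  have hsq : r' * r' = u :=
    PadicInt.ext (by rw [PadicInt.coe_mul, PadicInt.coe_intCast]; exact hr.symm)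
  have hmod := congrArg (PadicInt.toZModPow 2) hsq
  rw [map_mul, map_intCast] at hmod
  have hu4 : (u : ZMod (2 ^ 2)) = 3 := by
    rw [← ZMod.intCast_mod u (2 ^ 2)]
    push_cast
    rw [hu]
    rfl
  rw [hu4] at hmod
  exact (by decide : ∀ c : ZMod (2 ^ 2), c * c ≠ 3) _ hmod

end Padic

lemma isSquare_of_isSquare_mul_self_mul {K : Type*} [Field K] {a x : K} (ha : a ≠ 0)
    (h : IsSquare (a * a * x)) : IsSquare x := by
  simpa [ha] using h.div (IsSquare.mul_self a)

def IsFundamentalDiscriminant (d : ℤ) : Prop :=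
  (d % 4 = 1 ∧ Squarefree d) ∨ ∃ m : ℤ, d = 4 * m ∧ Squarefree m ∧ (m % 4 = 2 ∨ m % 4 = 3)

namespace IsFundamentalDiscriminant

lemma not_mul_self_dvd {d : ℤ} (hd : IsFundamentalDiscriminant d) {ℓ : ℕ} (hℓ : ℓ.Prime)
    (hℓ2 : ℓ ≠ 2) : ¬(ℓ : ℤ) * ℓ ∣ d := by
  have hprime : Prime (ℓ : ℤ) := Nat.prime_iff_prime_int.mp hℓ
  intro hdvd
  rcases hd with ⟨-, hsf⟩ | ⟨m, rfl, hsf, -⟩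
  · exact hprime.not_isUnit (hsf _ hdvd)
  · have hcop : IsCoprime ((ℓ : ℤ) * ℓ) 4 := by
      have h2 : IsCoprime (ℓ : ℤ) 2 := hprime.coprime_iff_not_dvd.mpr fun h =>
        hℓ2 ((Nat.prime_dvd_prime_iff_eq hℓ Nat.prime_two).mp (by exact_mod_cast h))
      simpa [sq] using h2.pow (m := 2) (n := 2)
    exact hprime.not_isUnit (hsf _ (hcop.dvd_of_dvd_mul_left hdvd))

lemma not_isSquare_mul_padic {d : ℤ} (hd : IsFundamentalDiscriminant d) {ℓ : ℕ} [Fact ℓ.Prime]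
    (hℓd : (ℓ : ℤ) ∣ d) {c : ℤ} (hℓc : ¬(ℓ : ℤ) ∣ c) (hc : c % 4 = 1) :
    ¬IsSquare ((c * d : ℤ) : ℚ_[ℓ]) := by
  have hprime : Prime (ℓ : ℤ) := Nat.prime_iff_prime_int.mp Fact.out
  rcases eq_or_ne ℓ 2 with rfl | hℓ2
  · obtain ⟨m, rfl, -, hm⟩ : ∃ m, d = 4 * m ∧ Squarefree m ∧ (m % 4 = 2 ∨ m % 4 = 3) :=
      hd.resolve_left (by omega)
    rcases hm with hm | hm
    · obtain ⟨n, rfl⟩ : ∃ n, m = 2 * n := ⟨m / 2, by omega⟩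
      have hcast : ((c * (4 * (2 * n)) : ℤ) : ℚ_[2]) = ((2 : ℕ) : ℚ_[2]) ^ 3 * ((c * n : ℤ)) := by
        push_cast
        ring
      rw [hcast]
      exact Padic.not_isSquare_prime_pow_mul (by decide)
        (hprime.dvd_mul.not.mpr (not_or.mpr ⟨hℓc, by omega⟩))
    · have hcast : ((c * (4 * m) : ℤ) : ℚ_[2]) = 2 * 2 * ((c * m : ℤ) : ℚ_[2]) := by
        push_cast
        ring
      have hcm : c * m % 4 = 3 := by rw [Int.mul_emod, hc, hm]; rfl
      rw [hcast]
      exact fun hsq => Padic.not_isSquare_intCast_of_emod_four_eq_three hcm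
        (isSquare_of_isSquare_mul_self_mul two_ne_zero hsq)
  · obtain ⟨e, rfl⟩ := hℓd
    have hℓe : ¬(ℓ : ℤ) ∣ e := fun h => hd.not_mul_self_dvd Fact.out hℓ2 (mul_dvd_mul_left _ h)
    have hcast : ((c * (ℓ * e) : ℤ) : ℚ_[ℓ]) = (ℓ : ℚ_[ℓ]) ^ 1 * ((c * e : ℤ) : ℚ_[ℓ]) := by
      push_cast
      ring
    rw [hcast]
    exact Padic.not_isSquare_prime_pow_mul odd_one (hprime.dvd_mul.not.mpr (not_or.mpr ⟨hℓc, hℓe⟩))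

end IsFundamentalDiscriminant

open Classical in
/-- **Key step in Lemma 5.5 of Kriz–Li.** Let `d` be a fundamental discriminant and
`ℓ ≠ 3` a prime dividing `d`. Then the elliptic curve `E_d : y² = x³ − 432d` over the
`ℓ`-adic field `ℚ_ℓ` has no `ℚ_ℓ`-rational point of order 3: every `P ∈ E_d(ℚ_ℓ)` with
`3·P = O` is `O`. -/
theorem Ed_no_three_torsion_over_Qell
    (d : ℤ)
    (hfund : (d % 4 = 1 ∧ Squarefree d) ∨
      (∃ m : ℤ, d = 4 * m ∧ Squarefree m ∧ (m % 4 = 2 ∨ m % 4 = 3)))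
    (ℓ : ℕ) [Fact ℓ.Prime] (hℓ3 : ℓ ≠ 3) (hdvd : (ℓ : ℤ) ∣ d)
    (Ed : WeierstrassCurve ℚ_[ℓ])
    (hEd : Ed = { a₁ := 0, a₂ := 0, a₃ := 0, a₄ := 0, a₆ := -432 * (d : ℚ_[ℓ]) }) :
    ∀ P : Ed.toAffine.Point, 3 • P = 0 → P = 0 := by
  subst hEd
  intro P hP
  by_contra hP0
  have hd : IsFundamentalDiscriminant d := hfund
  have hprime : Prime (ℓ : ℤ) := Nat.prime_iff_prime_int.mp Fact.out
  have hℓ_three : ¬(ℓ : ℤ) ∣ -3 := fun h =>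
    hℓ3 ((Nat.prime_dvd_prime_iff_eq Fact.out Nat.prime_three).mp (by exact_mod_cast dvd_neg.mp h))
  rcases WeierstrassCurve.Affine.Point.isSquare_of_three_nsmul_eq_zero_mordell three_ne_zero hP hP0
    with hsq | hsq
  · refine hd.not_isSquare_mul_padic hdvd hℓ_three (by norm_num)
      (isSquare_of_isSquare_mul_self_mul (a := 12) (by norm_num) ?_)
    convert hsq using 1
    push_cast
    ring
  · refine hd.not_isSquare_mul_padic hdvd (c := 1) hprime.not_dvd_one (by norm_num)
      (isSquare_of_isSquare_mul_self_mul (a := 36) (by norm_num) ?_)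
    convert hsq using 1
    push_cast
    ring
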